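/- arXiv:2603.23044 — 2 statements merged into one kernel-verified Lean document; each statement's English description precedes it below -/
import Mathlib

section
/- Let Ã(H) = [[A, A_u],[H, Λ]] with H = K·A − Λ·K + K·A_u·K for some K ∈ ℝ^{m×n}. Then the spectrum of Ã(H) equals the union of the spectrum of A + A_u·K and the spectrum of Λ − K·A_u. -/
/-!
Conjugating by the block shear `T = [[1, 0], [K, 1]]` gives
`T⁻¹ Ã(H) T = [[A + A_u K, A_u], [H - K A + Λ K - K A_u K, Λ - K A_u]]`, and the choice of `H`
makes the lower-left block vanish. The spectrum is invariant under conjugation, and the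
characteristic polynomial of a block-triangular matrix is the product of those of its diagonal
blocks.
-/

open Matrix

namespace Matrix

variable {R : Type*} {n m : Type*} [Fintype n] [Fintype m] [DecidableEq n] [DecidableEq m]

theorem fromBlocks_one_zero_mul_fromBlocks_one_zero [Semiring R] (K L : Matrix m n R) :
    (fromBlocks 1 0 K 1 * fromBlocks 1 0 L 1 : Matrix (n ⊕ m) (n ⊕ m) R) =
      fromBlocks 1 0 (K + L) 1 := by
  simp [fromBlocks_multiply, add_comm]

def lowerShear [Ring R] (K : Matrix m n R) : (Matrix (n ⊕ m) (n ⊕ m) R)ˣ where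
  val := fromBlocks 1 0 K 1
  inv := fromBlocks 1 0 (-K) 1
  val_inv := by rw [fromBlocks_one_zero_mul_fromBlocks_one_zero, add_neg_cancel, fromBlocks_one]
  inv_val := by rw [fromBlocks_one_zero_mul_fromBlocks_one_zero, neg_add_cancel, fromBlocks_one]

theorem lowerShear_inv_mul_fromBlocks_mul_lowerShear [Ring R] (A : Matrix n n R)
    (B : Matrix n m R) (Λ : Matrix m m R) (K : Matrix m n R) :
    (↑(lowerShear K)⁻¹ : Matrix (n ⊕ m) (n ⊕ m) R) *
        fromBlocks A B (K * A - Λ * K + K * B * K) Λ *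
        (lowerShear K : Matrix (n ⊕ m) (n ⊕ m) R) =
      fromBlocks (A + B * K) B 0 (Λ - K * B) := by
  change fromBlocks 1 0 (-K) 1 * _ * fromBlocks 1 0 K 1 = _
  simp only [fromBlocks_multiply, Matrix.one_mul, Matrix.mul_one, Matrix.zero_mul,
    Matrix.mul_zero, add_zero, zero_add, Matrix.neg_mul, Matrix.add_mul, Matrix.mul_add,
    Matrix.mul_assoc]
  congr 1 <;> abel

theorem spectrum_fromBlocks_zero₂₁ {K : Type*} [Field K] (A : Matrix n n K) (B : Matrix n m K)
    (D : Matrix m m K) : spectrum K (fromBlocks A B 0 D) = spectrum K A ∪ spectrum K D := by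
  ext μ
  simp [mem_spectrum_iff_isRoot_charpoly]

theorem spectrum_fromBlocks_feedback {K : Type*} [Field K] (A : Matrix n n K) (B : Matrix n m K)
    (Λ : Matrix m m K) (L : Matrix m n K) :
    spectrum K (fromBlocks A B (L * A - Λ * L + L * B * L) Λ) =
      spectrum K (A + B * L) ∪ spectrum K (Λ - L * B) := by
  rw [← spectrum_fromBlocks_zero₂₁, ← lowerShear_inv_mul_fromBlocks_mul_lowerShear,
    spectrum.units_conjugate']

end Matrix

/-- With `H = K·A − Λ·K + K·A_u·K`, the spectrum of `Ã(H) = [[A, A_u],[H, Λ]]` equals the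
union of the spectra of `A + A_u·K` and `Λ − K·A_u`. -/
theorem spectrum_feedback_augmented (n m : ℕ)
    (A : Matrix (Fin n) (Fin n) ℝ) (Au : Matrix (Fin n) (Fin m) ℝ)
    (Λ : Matrix (Fin m) (Fin m) ℝ) (K : Matrix (Fin m) (Fin n) ℝ)
    (H : Matrix (Fin m) (Fin n) ℝ)
    (hH : H = K * A - Λ * K + K * Au * K) :
    spectrum ℂ ((Matrix.fromBlocks A Au H Λ).map (algebraMap ℝ ℂ)) =
      spectrum ℂ ((A + Au * K).map (algebraMap ℝ ℂ)) ∪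
        spectrum ℂ ((Λ - K * Au).map (algebraMap ℝ ℂ)) := by
  subst hH
  simpa only [fromBlocks_map, Matrix.map_mul, Matrix.map_add _ (map_add (algebraMap ℝ ℂ)),
    Matrix.map_sub _ (map_sub (algebraMap ℝ ℂ))] using
    spectrum_fromBlocks_feedback (A.map (algebraMap ℝ ℂ)) (Au.map (algebraMap ℝ ℂ))
      (Λ.map (algebraMap ℝ ℂ)) (K.map (algebraMap ℝ ℂ))
end

section
/- Let A ∈ ℝ^{n×n} with (A, A_u) stabilizable, Λ ∈ ℝ^{m×m} with Λ ⪯ −β·I for some β > 0, and K ∈ ℝ^{m×n} such that A + A_u·K is Hurwitz and ‖K·A_u‖₂ < β. Then with H = K·A − Λ·K + K·A_u·K, the matrix Ã(H) = [[A, A_u],[H, Λ]] is Hurwitz. -/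
open Matrix
open scoped InnerProductSpace

/-!
Conjugating `[[A, A_u], [H, Λ]]` by the shear `[[1, 0], [K, 1]]` gives the block upper triangular
matrix `[[A + A_u K, A_u], [0, Λ - K A_u]]`: the choice `H = K A - Λ K + K A_u K` is exactly what
makes the lower-left block vanish. So the spectrum is that of `A + A_u K`, Hurwitz by assumption,
together with that of `Λ - K A_u`, whose quadratic form is at most `(‖K A_u‖ - β) ‖x‖² < 0`. A real
matrix with quadratic form bounded by `c ‖x‖²` has all complex eigenvalues of real part at most `c`:
apply the bound to the real and imaginary parts of an eigenvector.
-/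

theorem real_inner_sub_apply_self_le {E : Type*} [NormedAddCommGroup E] [InnerProductSpace ℝ E]
    {S : E →L[ℝ] E} {c : ℝ} (hS : ∀ x, ⟪x, S x⟫_ℝ ≤ c * ‖x‖ ^ 2) (T : E →L[ℝ] E) (x : E) :
    ⟪x, (S - T) x⟫_ℝ ≤ (c + ‖T‖) * ‖x‖ ^ 2 := by
  have hT : -(‖T‖ * ‖x‖ ^ 2) ≤ ⟪x, T x⟫_ℝ :=
    calc -(‖T‖ * ‖x‖ ^ 2) = -(‖x‖ * (‖T‖ * ‖x‖)) := by ring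
      _ ≤ -(‖x‖ * ‖T x‖) := neg_le_neg (mul_le_mul_of_nonneg_left (T.le_opNorm x) (norm_nonneg x))
      _ ≤ ⟪x, T x⟫_ℝ := neg_le_of_abs_le (abs_real_inner_le_norm x (T x))
  rw [_root_.sub_apply, inner_sub_right]
  linarith [hS x]

namespace Matrix

section Charpoly

variable {R : Type*} [CommRing R] {n m : Type*} [Fintype n] [Fintype m] [DecidableEq n]
  [DecidableEq m]

theorem fromBlocks_one_zero_conj (A : Matrix n n R) (B : Matrix n m R) (C : Matrix m n R)
    (D : Matrix m m R) (K : Matrix m n R) :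
    fromBlocks 1 0 (-K) 1 * fromBlocks A B C D * fromBlocks 1 0 K 1 =
      fromBlocks (A + B * K) B (C - K * A + D * K - K * B * K) (D - K * B) := by
  simp only [fromBlocks_multiply, Matrix.one_mul, Matrix.zero_mul, Matrix.mul_one,
    Matrix.mul_zero, Matrix.neg_mul, Matrix.add_mul, Matrix.mul_assoc, add_zero, zero_add]
  congr 1 <;> abel

theorem charpoly_fromBlocks_eq_mul_charpoly (A : Matrix n n R) (B : Matrix n m R)
    (D : Matrix m m R) (K : Matrix m n R) :
    (fromBlocks A B (K * A - D * K + K * B * K) D).charpoly =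
      (A + B * K).charpoly * (D - K * B).charpoly := by
  set M := fromBlocks A B (K * A - D * K + K * B * K) D
  have hinv : fromBlocks 1 0 K 1 * fromBlocks 1 0 (-K) 1 = (1 : Matrix (n ⊕ m) (n ⊕ m) R) := by
    simp [fromBlocks_multiply]
  calc M.charpoly = (fromBlocks 1 0 (-K) 1 * (M * fromBlocks 1 0 K 1)).charpoly := by
        rw [charpoly_mul_comm, mul_assoc, hinv, mul_one]
    _ = (fromBlocks (A + B * K) B 0 (D - K * B)).charpoly := by
        rw [← mul_assoc, fromBlocks_one_zero_conj]
        congr 2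
        abel
    _ = _ := charpoly_fromBlocks_zero₂₁ _ _ _

theorem mem_spectrum_map_algebraMap_iff {K L : Type*} [Field K] [Field L] [Algebra K L]
    (M : Matrix n n K) (μ : L) :
    μ ∈ spectrum L (M.map (algebraMap K L)) ↔ (M.charpoly.map (algebraMap K L)).IsRoot μ := by
  rw [mem_spectrum_iff_isRoot_charpoly, charpoly_map]

end Charpoly

theorem re_le_of_mem_spectrum_of_inner_le {ι : Type*} [Fintype ι] [DecidableEq ι]
    (B : Matrix ι ι ℝ) (c : ℝ)
    (hB : ∀ x : EuclideanSpace ℝ ι, ⟪x, toEuclideanCLM (𝕜 := ℝ) B x⟫_ℝ ≤ c * ‖x‖ ^ 2)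
    {μ : ℂ} (hμ : μ ∈ spectrum ℂ (B.map (algebraMap ℝ ℂ))) : μ.re ≤ c := by
  rw [← spectrum_toLin', ← Module.End.hasEigenvalue_iff_mem_spectrum] at hμ
  obtain ⟨v, hv⟩ := hμ.exists_hasEigenvector
  have hBv : B.map (algebraMap ℝ ℂ) *ᵥ v = μ • v := by
    simpa using hv.apply_eq_smul
  set x : EuclideanSpace ℝ ι := WithLp.toLp 2 fun i ↦ (v i).re
  set y : EuclideanSpace ℝ ι := WithLp.toLp 2 fun i ↦ (v i).im
  have hBx : toEuclideanCLM (𝕜 := ℝ) B x = μ.re • x - μ.im • y := by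
    ext i
    have := congrArg Complex.re (congrFun hBv i)
    simpa [x, y, mulVec, dotProduct, Complex.re_sum] using this
  have hBy : toEuclideanCLM (𝕜 := ℝ) B y = μ.im • x + μ.re • y := by
    ext i
    have := congrArg Complex.im (congrFun hBv i)
    simp [x, y, mulVec, dotProduct, Complex.im_sum] at this ⊢
    linarith
  have hxy : 0 < ‖x‖ ^ 2 + ‖y‖ ^ 2 := by
    have hxy0 : x ≠ 0 ∨ y ≠ 0 := by
      by_contra! h
      refine hv.2 (funext fun i ↦ Complex.ext ?_ ?_)
      · simpa [x] using congrFun (congrArg WithLp.ofLp h.1) i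
      · simpa [y] using congrFun (congrArg WithLp.ofLp h.2) i
    rcases hxy0 with h | h
    · have := norm_pos_iff.2 h; positivity
    · have := norm_pos_iff.2 h; positivity
  have key : ⟪x, toEuclideanCLM (𝕜 := ℝ) B x⟫_ℝ + ⟪y, toEuclideanCLM (𝕜 := ℝ) B y⟫_ℝ =
      μ.re * (‖x‖ ^ 2 + ‖y‖ ^ 2) := by
    rw [hBx, hBy, inner_sub_right, inner_add_right, real_inner_smul_right, real_inner_smul_right,
      real_inner_smul_right, real_inner_smul_right, real_inner_comm x y,
      real_inner_self_eq_norm_sq, real_inner_self_eq_norm_sq]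
    ring
  refine le_of_mul_le_mul_right ?_ hxy
  rw [← key, mul_add]
  exact add_le_add (hB x) (hB y)

end Matrix

theorem augmented_hurwitz_general (n m : ℕ)
    (A : Matrix (Fin n) (Fin n) ℝ) (Au : Matrix (Fin n) (Fin m) ℝ)
    (Λ : Matrix (Fin m) (Fin m) ℝ) (K : Matrix (Fin m) (Fin n) ℝ)
    (β : ℝ)
    (hΛ : ∀ x : EuclideanSpace ℝ (Fin m),
      ⟪x, (Matrix.toEuclideanCLM (𝕜 := ℝ) Λ) x⟫_ℝ ≤ -β * ‖x‖ ^ 2)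
    (hK : ∀ μ ∈ spectrum ℂ ((A + Au * K).map (algebraMap ℝ ℂ)), μ.re < 0)
    (hKAu : ‖Matrix.toEuclideanCLM (𝕜 := ℝ) (K * Au)‖ < β)
    (H : Matrix (Fin m) (Fin n) ℝ)
    (hH : H = K * A - Λ * K + K * Au * K) :
    ∀ μ ∈ spectrum ℂ ((Matrix.fromBlocks A Au H Λ).map (algebraMap ℝ ℂ)), μ.re < 0 := by
  have hΛK (x : EuclideanSpace ℝ (Fin m)) :
      ⟪x, toEuclideanCLM (𝕜 := ℝ) (Λ - K * Au) x⟫_ℝ ≤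
        (-β + ‖toEuclideanCLM (𝕜 := ℝ) (K * Au)‖) * ‖x‖ ^ 2 := by
    simpa only [map_sub] using real_inner_sub_apply_self_le hΛ (toEuclideanCLM (𝕜 := ℝ) (K * Au)) x
  intro μ hμ
  rw [hH, mem_spectrum_map_algebraMap_iff, charpoly_fromBlocks_eq_mul_charpoly, Polynomial.map_mul,
    Polynomial.root_mul, ← mem_spectrum_map_algebraMap_iff,
    ← mem_spectrum_map_algebraMap_iff] at hμ
  rcases hμ with hμ | hμ
  · exact hK μ hμ
  · linarith [re_le_of_mem_spectrum_of_inner_le _ _ hΛK hμ]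

/-- Proposition (Appendix A): if `(A, A_u)` is stabilizable, `Λ ⪯ −β·I` with `β > 0`,
`K` renders `A + A_u·K` Hurwitz, and `‖K·A_u‖₂ < β`, then with
`H = K·A − Λ·K + K·A_u·K` the augmented matrix `Ã(H) = [[A, A_u],[H, Λ]]` is Hurwitz. -/
theorem augmented_hurwitz (n m : ℕ)
    (A : Matrix (Fin n) (Fin n) ℝ) (Au : Matrix (Fin n) (Fin m) ℝ)
    (Λ : Matrix (Fin m) (Fin m) ℝ) (K : Matrix (Fin m) (Fin n) ℝ)
    (β : ℝ) (hβ : 0 < β)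
    (hstab : ∃ K₀ : Matrix (Fin m) (Fin n) ℝ,
      ∀ μ ∈ spectrum ℂ ((A + Au * K₀).map (algebraMap ℝ ℂ)), μ.re < 0)
    (hΛ : ∀ x : EuclideanSpace ℝ (Fin m),
      ⟪x, (Matrix.toEuclideanCLM (𝕜 := ℝ) Λ) x⟫_ℝ ≤ -β * ‖x‖ ^ 2)
    (hK : ∀ μ ∈ spectrum ℂ ((A + Au * K).map (algebraMap ℝ ℂ)), μ.re < 0)
    (hKAu : ‖Matrix.toEuclideanCLM (𝕜 := ℝ) (K * Au)‖ < β)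
    (H : Matrix (Fin m) (Fin n) ℝ)
    (hH : H = K * A - Λ * K + K * Au * K) :
    ∀ μ ∈ spectrum ℂ ((Matrix.fromBlocks A Au H Λ).map (algebraMap ℝ ℂ)), μ.re < 0 :=
  augmented_hurwitz_general n m A Au Λ K β hΛ hK hKAu H hH
end
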